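/- arXiv:math/0512370 — 7 statements merged into one kernel-verified Lean document; each statement's English description precedes it below -/
import Mathlib

section
/- Let a₁,…,a_n ∈ ℂ be distinct. If (x₁,…,x_n) ∈ ℂⁿ satisfies x_k² = Σ_{j≠k} (x_j − x_k)/(a_j − a_k) for every k = 1,…,n, then Σ_{k=1}^n x_k = 0. -/
/-!
Choose a nonzero polynomial `y` of degree at most `n` with `y'(a_k) = x_k y(a_k)` for all `k`
(`n` linear conditions on `n + 1` coefficients). With `A = ∏ (z - a_j)` and `B = A · Σ x_j/(z - a_j)`,
the polynomial `Θ = A y'' - A' y' + B y` vanishes at each `a_k`, and the system says precisely that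
`Θ'` vanishes there too. So `A²` divides `Θ`, which has degree `< 2n`; hence `Θ = 0`. In `Θ` only
`B y` reaches degree `n - 1 + deg y`, with top coefficient `(Σ x_k) · lead y`, so `Σ x_k = 0`.
-/

open Polynomial Finset Lagrange

namespace Polynomial

variable {R : Type*} [CommRing R]

theorem X_sub_C_sq_dvd_of_isRoot_of_isRoot_derivative {p : R[X]} {t : R} (h₀ : p.IsRoot t)
    (h₁ : (derivative p).IsRoot t) : (X - C t) ^ 2 ∣ p := by
  rcases eq_or_ne p 0 with rfl | hp
  · exact dvd_zero _
  · exact (le_rootMultiplicity_iff hp).mp ((one_lt_rootMultiplicity_iff_isRoot hp).mpr ⟨h₀, h₁⟩)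

theorem coeff_mul_derivative_eq_zero {p q : R[X]} {m : ℕ} (hp : p.natDegree ≤ m) :
    (p * derivative q).coeff (m + q.natDegree) = 0 := by
  rcases eq_or_ne q.natDegree 0 with hq | hq
  · rw [eq_C_of_natDegree_eq_zero hq, derivative_C, mul_zero, coeff_zero]
  · refine coeff_eq_zero_of_natDegree_lt (natDegree_mul_le.trans_lt ?_)
    have := natDegree_derivative_lt hq
    omega

theorem exists_ne_zero_eval_derivative_eq_mul_eval {K ι : Type*} [Field K] [Fintype ι]
    (a x : ι → K) :
    ∃ y : K[X], y ≠ 0 ∧ y.natDegree ≤ Fintype.card ι ∧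
      ∀ i, eval (a i) (derivative y) = x i * eval (a i) y := by
  let φ : degreeLT K (Fintype.card ι + 1) →ₗ[K] ι → K := LinearMap.pi fun i =>
    (leval (a i) ∘ₗ derivative - x i • leval (a i)) ∘ₗ (degreeLT K _).subtype
  have hrank : Module.finrank K (ι → K) < Module.finrank K (degreeLT K (Fintype.card ι + 1)) := by
    simp [(degreeLTEquiv K _).finrank_eq]
  obtain ⟨y, hyφ, hy0⟩ :=
    Submodule.exists_mem_ne_zero_of_ne_bot (LinearMap.ker_ne_bot_of_finrank_lt (f := φ) hrank)
  have hy0' : (y : K[X]) ≠ 0 := by simpa using hy0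
  refine ⟨y, hy0', ?_, fun i => ?_⟩
  · have := (natDegree_lt_iff_degree_lt hy0').mpr (mem_degreeLT.mp y.2)
    omega
  · simpa [φ, sub_eq_zero] using congr_fun (LinearMap.mem_ker.mp hyφ) i

end Polynomial

namespace Lagrange

variable {K ι : Type*} [Field K] [DecidableEq ι] {s : Finset ι} {v : ι → K}

theorem eval_derivative_nodal_erase_of_ne {i j : ι} (hi : i ∈ s) (hj : j ∈ s) (hvij : v i ≠ v j) :
    eval (v i) (derivative (nodal (s.erase j) v)) =
      eval (v i) (nodal (s.erase i) v) / (v i - v j) := by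
  have hij : i ≠ j := fun h => hvij (congrArg v h)
  rw [eval_nodal_derivative_eval_node_eq (mem_erase.mpr ⟨hij, hi⟩),
    nodal_eq_mul_nodal_erase (mem_erase.mpr ⟨hij.symm, hj⟩) (s := s.erase i), erase_right_comm,
    eval_mul, eval_sub, eval_X, eval_C, mul_div_cancel_left₀ _ (sub_ne_zero.mpr hvij)]

end Lagrange

section FuchsianOperator

variable {K ι : Type*} [Field K] [Fintype ι] [DecidableEq ι]

/-- `A · Q` for `A = nodal univ a` and the paper's `Q(z) = Σ x_j / (z - a_j)`. -/
noncomputable def residueNumerator (a x : ι → K) : K[X] :=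
  ∑ j, C (x j) * nodal (univ.erase j) a

theorem residueNumerator_sub_const (a x : ι → K) (c : K) :
    residueNumerator a (fun j => x j - c) =
      residueNumerator a x - C c * derivative (nodal univ a) := by
  simp only [residueNumerator, derivative_nodal, C_sub, sub_mul, sum_sub_distrib, mul_sum]

theorem eval_residueNumerator (a x : ι → K) (i : ι) :
    eval (a i) (residueNumerator a x) = x i * eval (a i) (nodal (univ.erase i) a) := by
  rw [residueNumerator, eval_finsetSum, sum_eq_single i (fun j _ hji => ?_) (by simp), eval_mul,
    eval_C]
  rw [eval_mul, eval_nodal_at_node (mem_erase.mpr ⟨hji.symm, mem_univ i⟩), mul_zero]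

theorem eval_derivative_residueNumerator {a : ι → K} (ha : Function.Injective a) {w : ι → K}
    {i : ι} (hw : w i = 0) :
    eval (a i) (derivative (residueNumerator a w)) =
      eval (a i) (nodal (univ.erase i) a) * ∑ j ∈ univ.erase i, w j / (a i - a j) := by
  rw [residueNumerator, derivative_sum, eval_finsetSum, ← sum_erase_add _ _ (mem_univ i), mul_sum]
  simp only [derivative_C_mul, eval_mul, eval_C, hw, zero_mul, add_zero]
  refine sum_congr rfl fun j hj => ?_
  rw [eval_derivative_nodal_erase_of_ne (mem_univ i) (mem_univ j) (ha.ne (mem_erase.mp hj).1.symm)]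
  ring

theorem natDegree_residueNumerator_le (a x : ι → K) :
    (residueNumerator a x).natDegree ≤ Fintype.card ι - 1 :=
  natDegree_sum_le_of_forall_le _ _ fun j _ =>
    natDegree_C_mul_le _ _ |>.trans_eq <| by simp [card_erase_of_mem]

theorem coeff_residueNumerator (a x : ι → K) :
    (residueNumerator a x).coeff (Fintype.card ι - 1) = ∑ j, x j := by
  simp only [residueNumerator, finsetSum_coeff, coeff_C_mul]
  refine sum_congr rfl fun j _ => ?_
  have h := (nodal_monic (s := univ.erase j) (v := a)).coeff_natDegree
  rw [natDegree_nodal, card_erase_of_mem (mem_univ j), card_univ] at h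
  rw [h, mul_one]

/-- `A · (y'' + P y' + Q y)` for the paper's `P = -A'/A` and `Q`, where `A = nodal univ a`. -/
noncomputable def fuchsianOperator (a x : ι → K) (y : K[X]) : K[X] :=
  nodal univ a * derivative (derivative y) - derivative (nodal univ a) * derivative y +
    residueNumerator a x * y

variable {a x : ι → K} {y : K[X]}

theorem eval_fuchsianOperator_eq_zero {i : ι}
    (hy : eval (a i) (derivative y) = x i * eval (a i) y) :
    eval (a i) (fuchsianOperator a x y) = 0 := by
  simp only [fuchsianOperator, eval_add, eval_sub, eval_mul]
  rw [eval_nodal_at_node (mem_univ i), eval_nodal_derivative_eval_node_eq (mem_univ i),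
    eval_residueNumerator, hy]
  ring

theorem eval_derivative_fuchsianOperator_eq_zero (ha : Function.Injective a) {i : ι}
    (hx : x i ^ 2 = ∑ j ∈ univ.erase i, (x j - x i) / (a j - a i))
    (hy : eval (a i) (derivative y) = x i * eval (a i) y) :
    eval (a i) (derivative (fuchsianOperator a x y)) = 0 := by
  set Aᵢ := eval (a i) (nodal (univ.erase i) a)
  -- `B - x_i A'` is the residue numerator of the weights `x_j - x_i`, which vanish at `i`.
  have hB' : eval (a i) (derivative (residueNumerator a x)) =
      x i * eval (a i) (derivative (derivative (nodal univ a))) - Aᵢ * x i ^ 2 := by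
    have h := eval_derivative_residueNumerator ha (w := fun j => x j - x i) (i := i) (sub_self _)
    rw [residueNumerator_sub_const, derivative_sub, derivative_C_mul, eval_sub, eval_mul,
      eval_C] at h
    have hsum : ∑ j ∈ univ.erase i, (x j - x i) / (a i - a j) = -x i ^ 2 := by
      rw [hx, ← sum_neg_distrib]
      exact sum_congr rfl fun j _ => by rw [← neg_sub (a j) (a i), div_neg]
    linear_combination h + Aᵢ * hsum
  simp only [fuchsianOperator, derivative_add, derivative_sub, derivative_mul, eval_add, eval_sub,
    eval_mul]
  rw [eval_nodal_at_node (mem_univ i), eval_nodal_derivative_eval_node_eq (mem_univ i),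
    eval_residueNumerator, hy, hB']
  ring

theorem nodal_sq_dvd_fuchsianOperator (ha : Function.Injective a)
    (hx : ∀ i, x i ^ 2 = ∑ j ∈ univ.erase i, (x j - x i) / (a j - a i))
    (hy : ∀ i, eval (a i) (derivative y) = x i * eval (a i) y) :
    nodal univ a ^ 2 ∣ fuchsianOperator a x y := by
  rw [nodal, ← prod_pow]
  exact Fintype.prod_dvd_of_coprime (fun i j hij => ((pairwise_coprime_X_sub_C ha) hij).pow)
    fun i => X_sub_C_sq_dvd_of_isRoot_of_isRoot_derivative (eval_fuchsianOperator_eq_zero (hy i))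
      (eval_derivative_fuchsianOperator_eq_zero ha (hx i) (hy i))

theorem natDegree_fuchsianOperator_lt [Nonempty ι] (hy : y.natDegree ≤ Fintype.card ι) :
    (fuchsianOperator a x y).natDegree < 2 * Fintype.card ι := by
  have hn := Fintype.card_pos (α := ι)
  have hA : (nodal univ a).natDegree = Fintype.card ι := by simp
  have hA' := natDegree_derivative_le (nodal univ a)
  have hB := natDegree_residueNumerator_le a x
  have hy' := natDegree_derivative_le y
  have hy'' := natDegree_derivative_le (derivative y)
  refine (natDegree_add_le _ _).trans_lt
    (max_lt ((natDegree_sub_le _ _).trans_lt (max_lt ?_ ?_)) ?_)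
  all_goals refine natDegree_mul_le.trans_lt ?_; omega

theorem fuchsianOperator_eq_zero [Nonempty ι] (ha : Function.Injective a)
    (hx : ∀ i, x i ^ 2 = ∑ j ∈ univ.erase i, (x j - x i) / (a j - a i))
    (hy : ∀ i, eval (a i) (derivative y) = x i * eval (a i) y)
    (hdeg : y.natDegree ≤ Fintype.card ι) :
    fuchsianOperator a x y = 0 :=
  eq_zero_of_dvd_of_natDegree_lt (nodal_sq_dvd_fuchsianOperator ha hx hy) <| by
    simpa [natDegree_pow, mul_comm] using natDegree_fuchsianOperator_lt (x := x) (a := a) hdeg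

theorem coeff_fuchsianOperator (a x : ι → K) (y : K[X]) :
    (fuchsianOperator a x y).coeff (Fintype.card ι - 1 + y.natDegree) =
      (∑ j, x j) * y.leadingCoeff := by
  have hA : (nodal univ a).natDegree ≤ Fintype.card ι - 1 + 1 := by simp; omega
  have hA' : (derivative (nodal univ a)).natDegree ≤ Fintype.card ι - 1 :=
    (natDegree_derivative_le _).trans (by simp)
  -- Rewriting `A y''` through `(A y')'` leaves only products with a first derivative.
  have hAy'' : nodal univ a * derivative (derivative y) =
      derivative (nodal univ a * derivative y) - derivative (nodal univ a) * derivative y := by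
    rw [derivative_mul]; ring
  rw [fuchsianOperator, hAy'', coeff_add, coeff_sub, coeff_sub, coeff_derivative,
    coeff_mul_derivative_eq_zero hA', add_right_comm, coeff_mul_derivative_eq_zero hA,
    coeff_mul_add_eq_of_natDegree_le (natDegree_residueNumerator_le a x) le_rfl,
    coeff_residueNumerator, leadingCoeff]
  ring

end FuchsianOperator

/-- **Proposition 6(a).** For distinct complex `a₁, …, a_n`, any solution of
`x_k² = Σ_{j≠k} (x_j - x_k)/(a_j - a_k)` satisfies `Σ_k x_k = 0`. -/
theorem bethe_system_sum_zero
    (n : ℕ) (a : Fin n → ℂ) (ha : Function.Injective a) (x : Fin n → ℂ)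
    (hx : ∀ k, (x k) ^ 2 = ∑ j ∈ Finset.univ.erase k, (x j - x k) / (a j - a k)) :
    ∑ k, x k = 0 := by
  cases isEmpty_or_nonempty (Fin n)
  · simp
  obtain ⟨y, hy0, hdeg, hy⟩ := exists_ne_zero_eval_derivative_eq_mul_eval a x
  have hcoeff := coeff_fuchsianOperator a x y
  rw [fuchsianOperator_eq_zero ha hx hy hdeg, coeff_zero, eq_comm] at hcoeff
  exact (mul_eq_zero.mp hcoeff).resolve_right (leadingCoeff_ne_zero.mpr hy0)
end

section
/- Let a₁,…,a_n ∈ ℂ be distinct. If (x₁,…,x_n) ∈ ℂⁿ satisfies x_k² = Σ_{j≠k} (x_j − x_k)/(a_j − a_k) for every k = 1,…,n, then there exists an integer s with 1 ≤ s ≤ n+1 and n+s odd such that (n+1)² − 4·Σ_{k=1}^n x_k·a_k = s² (an identity in ℂ). -/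
/-!
Put `A = ∏ₖ (X - aₖ)` and `B = Σₖ xₖ A / (X - aₖ)`, so that the differential equation reads
`A y'' - A' y' + B y = 0`. The system says precisely that `B² + A'B' - A''B` vanishes at every
`aₖ`, and then every polynomial `g = A y'' - A' y' + B y` satisfies the `n` linear conditions
`(B - A'')(aₖ) g(aₖ) + A'(aₖ) g'(aₖ) = 0`. These conditions are independent on polynomials of
degree `< 2n` (evaluate them on `A h` and interpolate `h`), so whenever the operator maps
polynomials of degree `< m` to polynomials of degree `< 2n`, it has at least `m - n` independent
polynomial solutions of degree `< m`.

For `m = n + 1` this gives a nonzero solution, whose leading coefficient forces `Σ xₖ = 0`, i.e.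
`deg B ≤ n - 2`. Then `m = n + 2` gives two solutions of different degrees `d ≠ e`. Both degrees
are roots of the indicial equation `t (t - 1) - n t + Σ xₖ aₖ = 0` at infinity, so `d + e = n + 1`,
`d e = Σ xₖ aₖ` and `(n + 1)² - 4 Σ xₖ aₖ = (e - d)²`.
-/

open Polynomial Finset Module Lagrange

lemma Submodule.finrank_map_add_finrank_inf_ker {K V W : Type*} [DivisionRing K]
    [AddCommGroup V] [Module K V] [AddCommGroup W] [Module K W] (f : V →ₗ[K] W)
    (p : Submodule K V) [FiniteDimensional K p] :
    finrank K (p.map f) + finrank K (p ⊓ LinearMap.ker f : Submodule K V) = finrank K p := by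
  rw [← (f.domRestrict p).finrank_range_add_finrank_ker, LinearMap.range_domRestrict,
    LinearMap.ker_domRestrict, ← Submodule.map_comap_subtype, Submodule.finrank_map_subtype_eq]

namespace Polynomial

lemma finrank_degreeLT (R : Type*) [Ring R] [StrongRankCondition R] (m : ℕ) :
    finrank R (degreeLT R m) = m :=
  (degreeLTEquiv R m).finrank_eq.trans (finrank_fin_fun R)

lemma exists_natDegree_ne_of_two_le_finrank {K : Type*} [Field K] {P : Submodule K K[X]}
    (hP : 2 ≤ finrank K P) : ∃ p ∈ P, ∃ q ∈ P, p ≠ 0 ∧ q ≠ 0 ∧ p.natDegree ≠ q.natDegree := by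
  by_contra! hsame
  obtain ⟨p, hp, hp0⟩ := Submodule.exists_mem_ne_zero_of_ne_bot fun h : P = ⊥ => by
    rw [h, finrank_bot] at hP
    omega
  have hinj : Function.Injective ((lcoeff K p.natDegree).domRestrict P) := by
    refine (injective_iff_map_eq_zero _).2 fun ⟨q, hq⟩ hq0 => Subtype.ext ?_
    by_contra hq0'
    rw [LinearMap.domRestrict_apply, lcoeff_apply, hsame p hp q hq hp0 hq0'] at hq0
    exact hq0' (leadingCoeff_eq_zero.1 hq0)
  have := LinearMap.finrank_le_finrank_of_injective hinj
  rw [finrank_self] at this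
  omega

variable {R : Type*} [CommRing R]

/-- `A` times the operator `y ↦ y'' + P y' + Q y` with `P = -A'/A` and `Q = B/A`. -/
noncomputable def fuchsOp (A B : R[X]) : R[X] →ₗ[R] R[X] :=
  LinearMap.mulLeft R A ∘ₗ derivative ∘ₗ derivative
    - LinearMap.mulLeft R (derivative A) ∘ₗ derivative + LinearMap.mulLeft R B

lemma fuchsOp_apply (A B y : R[X]) :
    fuchsOp A B y = A * derivative (derivative y) - derivative A * derivative y + B * y :=
  rfl

noncomputable def fuchsSolutions (A B : R[X]) (m : ℕ) : Submodule R R[X] :=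
  degreeLT R m ⊓ LinearMap.ker (fuchsOp A B)

/-- At a root `z` of `A`, this is the combination of `g(z)` and `g'(z)` in which `y'(z)` cancels
for `g = fuchsOp A B y`. -/
noncomputable def fuchsFunctional (A B : R[X]) (z : R) : R[X] →ₗ[R] R :=
  (B.eval z - (derivative (derivative A)).eval z) • leval z
    + (derivative A).eval z • (leval z ∘ₗ derivative)

lemma fuchsFunctional_apply (A B : R[X]) (z : R) (g : R[X]) :
    fuchsFunctional A B z g = (B.eval z - (derivative (derivative A)).eval z) * g.eval z
      + (derivative A).eval z * (derivative g).eval z :=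
  rfl

variable {A B y : R[X]} {k d : ℕ} {z : R}

lemma fuchsFunctional_fuchsOp (hz : A.eval z = 0)
    (hAB : B.eval z ^ 2 + (derivative A).eval z * (derivative B).eval z
      - (derivative (derivative A)).eval z * B.eval z = 0) (y : R[X]) :
    fuchsFunctional A B z (fuchsOp A B y) = 0 := by
  simp only [fuchsFunctional_apply, fuchsOp_apply, derivative_add, derivative_sub,
    derivative_mul, eval_add, eval_sub, eval_mul, hz]
  linear_combination y.eval z * hAB

lemma fuchsFunctional_mul_left (hz : A.eval z = 0) (h : R[X]) :
    fuchsFunctional A B z (A * h) = (derivative A).eval z ^ 2 * h.eval z := by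
  simp only [fuchsFunctional_apply, derivative_mul, eval_add, eval_mul, hz]
  ring

lemma natDegree_mul_derivative_le (hA : A.natDegree ≤ k + 1) (hy : y.natDegree ≤ d) :
    (A * derivative y).natDegree ≤ k + d := by
  cases d with
  | zero => simp [derivative_of_natDegree_zero (Nat.le_zero.1 hy)]
  | succ e =>
    have hy' : (derivative y).natDegree ≤ e := (natDegree_derivative_le y).trans (by omega)
    exact natDegree_mul_le_of_le hA hy' |>.trans_eq (by omega)

lemma coeff_mul_derivative (hA : A.natDegree ≤ k + 1) (hy : y.natDegree ≤ d) :
    (A * derivative y).coeff (k + d) = d * A.coeff (k + 1) * y.coeff d := by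
  cases d with
  | zero => simp [derivative_of_natDegree_zero (Nat.le_zero.1 hy)]
  | succ e =>
    have hy' : (derivative y).natDegree ≤ e := (natDegree_derivative_le y).trans (by omega)
    rw [show k + (e + 1) = k + 1 + e by omega, coeff_mul_add_eq_of_natDegree_le hA hy',
      coeff_derivative]
    push_cast
    ring

lemma natDegree_mul_derivative_derivative_le (hA : A.natDegree ≤ k + 2)
    (hy : y.natDegree ≤ d) : (A * derivative (derivative y)).natDegree ≤ k + d := by
  cases d with
  | zero => simp [derivative_of_natDegree_zero (Nat.le_zero.1 hy)]
  | succ e =>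
    have hy' : (derivative y).natDegree ≤ e := (natDegree_derivative_le y).trans (by omega)
    exact natDegree_mul_derivative_le (k := k + 1) hA hy' |>.trans_eq (by omega)

lemma coeff_mul_derivative_derivative (hA : A.natDegree ≤ k + 2) (hy : y.natDegree ≤ d) :
    (A * derivative (derivative y)).coeff (k + d)
      = d * (d - 1) * A.coeff (k + 2) * y.coeff d := by
  cases d with
  | zero => simp [derivative_of_natDegree_zero (Nat.le_zero.1 hy)]
  | succ e =>
    have hy' : (derivative y).natDegree ≤ e := (natDegree_derivative_le y).trans (by omega)
    rw [show k + (e + 1) = k + 1 + e by omega, coeff_mul_derivative hA hy', coeff_derivative]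
    push_cast
    ring

lemma natDegree_fuchsOp_le (hA : A.natDegree ≤ k + 2) (hB : B.natDegree ≤ k)
    (hy : y.natDegree ≤ d) : (fuchsOp A B y).natDegree ≤ k + d := by
  have hA' : (derivative A).natDegree ≤ k + 1 := (natDegree_derivative_le A).trans (by omega)
  rw [fuchsOp_apply]
  refine natDegree_add_le_of_degree_le ?_ (natDegree_mul_le_of_le hB hy)
  exact (natDegree_sub_le_of_le (natDegree_mul_derivative_derivative_le hA hy)
    (natDegree_mul_derivative_le hA' hy)).trans (max_self _).le

lemma coeff_fuchsOp (hA : A.natDegree ≤ k + 2) (hB : B.natDegree ≤ k) (hy : y.natDegree ≤ d) :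
    (fuchsOp A B y).coeff (k + d) =
      ((d * (d - 1) - (k + 2 : ℕ) * d) * A.coeff (k + 2) + B.coeff k) * y.coeff d := by
  have hA' : (derivative A).natDegree ≤ k + 1 := (natDegree_derivative_le A).trans (by omega)
  rw [fuchsOp_apply, coeff_add, coeff_sub, coeff_mul_derivative_derivative hA hy,
    coeff_mul_derivative hA' hy, coeff_mul_add_eq_of_natDegree_le hB hy, coeff_derivative]
  push_cast
  ring

lemma fuchsOp_mem_degreeLT (hA : A.natDegree ≤ k + 2) (hB : B.natDegree ≤ k) {m : ℕ}
    (hy : y ∈ degreeLT R m) : fuchsOp A B y ∈ degreeLT R (k + m) := by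
  cases m with
  | zero =>
    rw [mem_degreeLT, Nat.cast_zero] at hy
    simp [degree_eq_bot.1 (Nat.WithBot.lt_zero_iff.1 hy)]
  | succ d =>
    rw [degreeLT_succ_eq_degreeLE, mem_degreeLE, ← natDegree_le_iff_degree_le] at hy
    rw [← add_assoc, degreeLT_succ_eq_degreeLE, mem_degreeLE, ← natDegree_le_iff_degree_le]
    exact natDegree_fuchsOp_le hA hB hy

lemma fuchsOp_indicial_eq_zero [NoZeroDivisors R] (hA : A.natDegree ≤ k + 2)
    (hB : B.natDegree ≤ k) (hy : fuchsOp A B y = 0) (hy0 : y ≠ 0) :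
    (y.natDegree * (y.natDegree - 1) - (k + 2 : ℕ) * y.natDegree) * A.coeff (k + 2)
      + B.coeff k = 0 := by
  have hcoeff := coeff_fuchsOp hA hB (le_refl y.natDegree)
  rw [hy, coeff_zero] at hcoeff
  exact (mul_eq_zero.1 hcoeff.symm).resolve_right (leadingCoeff_ne_zero.2 hy0)

end Polynomial

section Nodal

variable {R : Type*} [CommRing R] {ι : Type*} [Fintype ι] [DecidableEq ι] (a : ι → R)

lemma eval_nodal_erase_of_ne {j k : ι} (h : j ≠ k) : (nodal (univ.erase j) a).eval (a k) = 0 :=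
  eval_nodal_at_node (mem_erase.2 ⟨h.symm, mem_univ k⟩)

lemma sub_mul_eval_derivative_nodal_erase {j k : ι} (h : j ≠ k) :
    (a k - a j) * (derivative (nodal (univ.erase j) a)).eval (a k)
      = (derivative (nodal univ a)).eval (a k) := by
  rw [eval_nodal_derivative_eval_node_eq (mem_univ k),
    nodal_eq_mul_nodal_erase (mem_erase.2 ⟨h, mem_univ j⟩),
    nodal_eq_mul_nodal_erase (mem_erase.2 ⟨h.symm, mem_univ k⟩), erase_right_comm]
  simp

lemma eval_derivative_derivative_nodal_eq_two_mul (k : ι) :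
    (derivative (derivative (nodal univ a))).eval (a k)
      = 2 * (derivative (nodal (univ.erase k) a)).eval (a k) := by
  rw [nodal_eq_mul_nodal_erase (mem_univ k)]
  simp only [derivative_mul, derivative_X, derivative_C, eval_add, eval_mul, eval_sub, eval_X,
    eval_C, sub_self, map_add, map_sub, sub_zero, one_mul]
  ring

lemma eval_derivative_nodal_erase_self (k : ι) :
    (derivative (nodal (univ.erase k) a)).eval (a k)
      = ∑ j ∈ univ.erase k, (derivative (nodal (univ.erase j) a)).eval (a k) := by
  have hsum := eval_derivative_derivative_nodal_eq_two_mul a k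
  rw [derivative_nodal, derivative_sum, eval_finsetSum, ← add_sum_erase _ _ (mem_univ k)] at hsum
  linear_combination -hsum

lemma eval_derivative_derivative_nodal (k : ι) :
    (derivative (derivative (nodal univ a))).eval (a k)
      = 2 * ∑ j ∈ univ.erase k, (derivative (nodal (univ.erase j) a)).eval (a k) := by
  rw [eval_derivative_derivative_nodal_eq_two_mul, eval_derivative_nodal_erase_self]

end Nodal

section Bethe

variable {K : Type*} [Field K] {ι : Type*} [Fintype ι] [DecidableEq ι] (a x : ι → K)

def IsBetheSolution : Prop :=
  ∀ k, x k ^ 2 = ∑ j ∈ univ.erase k, (x j - x k) / (a j - a k)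

/-- With `A = nodal univ a`, this is `A · Σₖ xₖ / (X - aₖ)`, so that `Q = B / A`. -/
noncomputable def betheB : K[X] :=
  ∑ k, C (x k) * nodal (univ.erase k) a

lemma eval_betheB (k : ι) :
    (betheB a x).eval (a k) = x k * (derivative (nodal univ a)).eval (a k) := by
  rw [betheB, eval_finsetSum, sum_eq_single k (fun j _ hj => by
    rw [eval_mul, eval_nodal_erase_of_ne a hj, mul_zero]) (by simp),
    eval_mul, eval_C, eval_nodal_derivative_eval_node_eq (mem_univ k)]

lemma eval_derivative_betheB (k : ι) :
    (derivative (betheB a x)).eval (a k)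
      = ∑ j ∈ univ.erase k, (x j + x k) * (derivative (nodal (univ.erase j) a)).eval (a k) := by
  simp only [betheB, derivative_sum, derivative_C_mul, eval_finsetSum, eval_mul, eval_C]
  rw [← add_sum_erase _ _ (mem_univ k), eval_derivative_nodal_erase_self, mul_sum,
    ← sum_add_distrib]
  exact sum_congr rfl fun j _ => by ring

variable {a x}

lemma eval_derivative_nodal_ne_zero (ha : Function.Injective a) (k : ι) :
    (derivative (nodal univ a)).eval (a k) ≠ 0 := by
  rw [eval_nodal_derivative_eval_node_eq (mem_univ k), eval_nodal]
  exact prod_ne_zero_iff.2 fun j hj => sub_ne_zero.2 (ha.ne (mem_erase.1 hj).1.symm)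

lemma natDegree_betheB_le {k : ℕ} (hk : Fintype.card ι = k + 1) : (betheB a x).natDegree ≤ k :=
  natDegree_sum_le_of_forall_le _ _ fun j _ =>
    (natDegree_C_mul_le _ _).trans (by simp [card_erase_of_mem, hk])

lemma coeff_betheB_of_card_eq_succ {k : ℕ} (hk : Fintype.card ι = k + 1) :
    (betheB a x).coeff k = ∑ j, x j := by
  refine (finsetSum_coeff _ _ _).trans (sum_congr rfl fun j _ => ?_)
  have hdeg : (nodal (univ.erase j) a).natDegree = k := by simp [card_erase_of_mem, hk]
  rw [coeff_C_mul, ← hdeg, nodal_monic.coeff_natDegree, mul_one]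

lemma coeff_betheB_of_card_eq_add_two {k : ℕ} (hk : Fintype.card ι = k + 2) :
    (betheB a x).coeff k = ∑ j, x j * a j - (∑ j, a j) * ∑ j, x j := by
  rw [mul_sum, ← sum_sub_distrib]
  refine (finsetSum_coeff _ _ _).trans (sum_congr rfl fun j _ => ?_)
  have hcard : #(univ.erase j) - 1 = k := by simp [card_erase_of_mem, hk]
  rw [coeff_C_mul, ← hcard, nodal_eq, prod_X_sub_C_coeff_card_pred _ _ (by simp [hk]),
    ← add_sum_erase _ _ (mem_univ j)]
  ring

lemma IsBetheSolution.fuchs_condition (ha : Function.Injective a) (hx : IsBetheSolution a x)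
    (k : ι) :
    (betheB a x).eval (a k) ^ 2
      + (derivative (nodal univ a)).eval (a k) * (derivative (betheB a x)).eval (a k)
      - (derivative (derivative (nodal univ a))).eval (a k) * (betheB a x).eval (a k) = 0 := by
  have hbethe : x k ^ 2 * (derivative (nodal univ a)).eval (a k) = -∑ j ∈ univ.erase k,
      (x j - x k) * (derivative (nodal (univ.erase j) a)).eval (a k) := by
    rw [hx k, sum_mul, ← sum_neg_distrib]
    refine sum_congr rfl fun j hj => ?_
    have hjk : a j - a k ≠ 0 := sub_ne_zero.2 (ha.ne (mem_erase.1 hj).1)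
    rw [← sub_mul_eval_derivative_nodal_erase a (mem_erase.1 hj).1]
    field_simp
    ring
  have hsplit : ∑ j ∈ univ.erase k, (x j + x k) * (derivative (nodal (univ.erase j) a)).eval (a k)
      = ∑ j ∈ univ.erase k, (x j - x k) * (derivative (nodal (univ.erase j) a)).eval (a k)
        + 2 * x k * ∑ j ∈ univ.erase k, (derivative (nodal (univ.erase j) a)).eval (a k) := by
    rw [mul_sum, ← sum_add_distrib]
    exact sum_congr rfl fun j _ => by ring
  rw [eval_betheB, eval_derivative_betheB, eval_derivative_derivative_nodal]
  linear_combination (derivative (nodal univ a)).eval (a k) * (hbethe + hsplit)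

lemma map_pi_fuchsFunctional_degreeLT (ha : Function.Injective a) (B : K[X]) :
    (degreeLT K (2 * Fintype.card ι)).map
      (LinearMap.pi fun k => fuchsFunctional (nodal univ a) B (a k)) = ⊤ := by
  refine eq_top_iff.2 fun c _ => ?_
  set h := interpolate univ a fun j => c j / (derivative (nodal univ a)).eval (a j) ^ 2
  refine ⟨nodal univ a * h, mem_degreeLT.2 ?_, funext fun j => ?_⟩
  · rw [degree_mul, degree_nodal, two_mul, Nat.cast_add, ← card_univ]
    exact WithBot.add_lt_add_left WithBot.coe_ne_bot (degree_interpolate_lt _ ha.injOn)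
  · have hj := eval_derivative_nodal_ne_zero ha j
    rw [LinearMap.pi_apply, fuchsFunctional_mul_left (eval_nodal_at_node (mem_univ j)),
      eval_interpolate_at_node _ ha.injOn (mem_univ j)]
    field_simp

lemma IsBetheSolution.le_finrank_fuchsSolutions (ha : Function.Injective a)
    (hx : IsBetheSolution a x) {k m : ℕ} (hk : Fintype.card ι ≤ k + 2)
    (hB : (betheB a x).natDegree ≤ k) (hkm : k + m = 2 * Fintype.card ι) :
    m ≤ Fintype.card ι + finrank K (fuchsSolutions (nodal univ a) (betheB a x) m) := by
  rw [fuchsSolutions]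
  set L := fuchsOp (nodal univ a) (betheB a x)
  set Λ := LinearMap.pi fun k => fuchsFunctional (nodal univ a) (betheB a x) (a k)
  have hA : (nodal univ a).natDegree ≤ k + 2 := by simpa using hk
  have hrange : finrank K (degreeLT K (2 * Fintype.card ι) ⊓ LinearMap.ker Λ : Submodule K K[X])
      = Fintype.card ι := by
    have := Submodule.finrank_map_add_finrank_inf_ker Λ (degreeLT K (2 * Fintype.card ι))
    rw [map_pi_fuchsFunctional_degreeLT ha, finrank_top, finrank_fintype_fun_eq_card,
      finrank_degreeLT] at this
    omega
  have himage : (degreeLT K m).map L ≤ degreeLT K (2 * Fintype.card ι) ⊓ LinearMap.ker Λ := by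
    rintro _ ⟨y, hy, rfl⟩
    refine ⟨hkm ▸ fuchsOp_mem_degreeLT hA hB hy, funext fun j => ?_⟩
    exact fuchsFunctional_fuchsOp (eval_nodal_at_node (mem_univ j)) (hx.fuchs_condition ha j) y
  have := Submodule.finrank_map_add_finrank_inf_ker L (degreeLT K m)
  rw [finrank_degreeLT] at this
  have := Submodule.finrank_mono himage
  omega

lemma IsBetheSolution.sum_eq_zero (ha : Function.Injective a) (hx : IsBetheSolution a x) :
    ∑ j, x j = 0 := by
  cases hk : Fintype.card ι with
  | zero => simp [univ_eq_empty_iff.2 (Fintype.card_eq_zero_iff.1 hk)]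
  | succ k =>
    have hB := natDegree_betheB_le (a := a) (x := x) hk
    have hdim := hx.le_finrank_fuchsSolutions ha (m := k + 2) (by omega) hB (by omega)
    obtain ⟨y, hy, hy0⟩ := Submodule.exists_mem_ne_zero_of_ne_bot
        (p := fuchsSolutions (nodal univ a) (betheB a x) (k + 2)) fun h => by
      rw [h, finrank_bot] at hdim
      omega
    have hind := fuchsOp_indicial_eq_zero (by simp [hk]) hB hy.2 hy0
    rwa [coeff_eq_zero_of_natDegree_lt (by simp [hk]), mul_zero, zero_add,
      coeff_betheB_of_card_eq_succ hk] at hind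

lemma IsBetheSolution.exists_indicial_roots (ha : Function.Injective a)
    (hx : IsBetheSolution a x) {k : ℕ} (hk : Fintype.card ι = k + 2) :
    ∃ d e : ℕ, d ≠ e ∧ (d * (d - 1) - (k + 2 : ℕ) * d + ∑ j, x j * a j : K) = 0 ∧
      (e * (e - 1) - (k + 2 : ℕ) * e + ∑ j, x j * a j : K) = 0 := by
  have hB : (betheB a x).natDegree ≤ k := by
    have htop := coeff_betheB_of_card_eq_succ (a := a) (x := x) hk
    rw [hx.sum_eq_zero ha] at htop
    simpa using natDegree_le_pred (natDegree_betheB_le (a := a) (x := x) hk) htop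
  have hdim := hx.le_finrank_fuchsSolutions ha (m := k + 4) (by omega) hB (by omega)
  obtain ⟨p, hp, q, hq, hp0, hq0, hpq⟩ := exists_natDegree_ne_of_two_le_finrank
    (P := fuchsSolutions (nodal univ a) (betheB a x) (k + 4)) (by omega)
  have hA : (nodal univ a).natDegree = k + 2 := by simp [hk]
  have hlead : (nodal univ a).coeff (k + 2) = 1 := hA ▸ nodal_monic.coeff_natDegree
  have hb : (betheB a x).coeff k = ∑ j, x j * a j := by
    rw [coeff_betheB_of_card_eq_add_two hk, hx.sum_eq_zero ha, mul_zero, sub_zero]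
  have hroot : ∀ y ∈ fuchsSolutions (nodal univ a) (betheB a x) (k + 4), y ≠ 0 →
      (y.natDegree * (y.natDegree - 1) - (k + 2 : ℕ) * y.natDegree + ∑ j, x j * a j : K) = 0 :=
    fun y hy hy0 => by simpa [hlead, hb] using fuchsOp_indicial_eq_zero hA.le hB hy.2 hy0
  exact ⟨p.natDegree, q.natDegree, hpq, hroot p hp hp0, hroot q hq hq0⟩

end Bethe

lemma exists_sq_eq_of_indicial_roots {R : Type*} [CommRing R] [NoZeroDivisors R] [CharZero R]
    {n d e : ℕ} {b : R} (hde : d ≠ e) (hd : d * (d - 1) - n * d + b = 0)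
    (he : e * (e - 1) - n * e + b = 0) :
    ∃ s : ℕ, 1 ≤ s ∧ s ≤ n + 1 ∧ Odd (n + s) ∧ ((n : R) + 1) ^ 2 - 4 * b = s ^ 2 := by
  wlog hlt : d < e generalizing d e
  · exact this hde.symm he hd (by omega)
  have hsum : (d : R) + e = n + 1 := by
    have hprod : ((d : R) - e) * (d + e - (n + 1)) = 0 := by linear_combination hd - he
    exact sub_eq_zero.1 ((mul_eq_zero.1 hprod).resolve_left
      (sub_ne_zero.2 (Nat.cast_injective.ne hde)))
  have hsumN : d + e = n + 1 := by exact_mod_cast hsum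
  refine ⟨e - d, by omega, by omega, ⟨e - 1, by omega⟩, ?_⟩
  push_cast [hlt.le]
  linear_combination (-4) * hd - (n + 1 + e - 3 * d) * hsum

/-- **Proposition 6(b).** For distinct complex `a₁, …, a_n`, any solution of
`x_k² = Σ_{j≠k} (x_j - x_k)/(a_j - a_k)` satisfies
`(n+1)² - 4 Σ_k x_k a_k = s²` for some integer `1 ≤ s ≤ n+1` with `n + s` odd. -/
theorem bethe_system_discriminant_square
    (n : ℕ) (a : Fin n → ℂ) (ha : Function.Injective a) (x : Fin n → ℂ)
    (hx : ∀ k, (x k) ^ 2 = ∑ j ∈ Finset.univ.erase k, (x j - x k) / (a j - a k)) :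
    ∃ s : ℕ, 1 ≤ s ∧ s ≤ n + 1 ∧ Odd (n + s) ∧
      ((n : ℂ) + 1) ^ 2 - 4 * ∑ k, x k * a k = (s : ℂ) ^ 2 := by
  obtain _ | _ | k := n
  · exact ⟨1, le_rfl, le_rfl, by decide, by simp⟩
  · have hx0 : x 0 = 0 := by simpa using IsBetheSolution.sum_eq_zero ha hx
    exact ⟨2, by norm_num, le_rfl, by decide, by simp [hx0]; norm_num⟩
  · obtain ⟨d, e, hde, hd, he⟩ :=
      IsBetheSolution.exists_indicial_roots ha hx (Fintype.card_fin _)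
    exact exists_sq_eq_of_indicial_roots hde hd he
end

section
/- Let a₁,…,a_n ∈ ℂ be distinct, let A = ∏_{j=1}^n (X − a_j), and let C ∈ ℂ[X]. Suppose y₁ ∈ ℂ[X] is a nonzero polynomial satisfying A·y₁″ − A′·y₁′ + C·y₁ = 0 and having no common complex root with A. Then there exists a polynomial y₂ ∈ ℂ[X] satisfying A·y₂″ − A′·y₂′ + C·y₂ = 0 such that y₁ and y₂ are linearly independent over ℂ. -/
open Polynomial

/-!
If `W = y₁ y₂' - y₁' y₂` equals `A`, then `y₂` is a solution, because for a solution `y₁`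
one has `y₁ (A y₂'' - A' y₂' + Q y₂) = A W' - A' W`; and `y₂` is independent of `y₁` since
`W ≠ 0`. This is reduction of order `y₂ = y₁ ∫ A y₁⁻²` made polynomial. At a root of `y₁` the
equation is regular (`A ≠ 0` there), so a double root would make all derivatives of `y₁`
vanish; hence `u y₁ + v y₁' = 1` for some `u, v`. For `p = -A v` one gets
`W(y₁, p) = A - y₁ r` with `r = A u + (A v)'`, and the equation gives `y₁' r ≡ 0 mod y₁`,
so `r = y₁ s`. Then `y₂ = p + y₁ ∫ s` has `W(y₁, y₂) = A`.
-/

def IsFuchsianSolution {R : Type*} [CommRing R] (A Q y : R[X]) : Prop :=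
  A * derivative (derivative y) - derivative A * derivative y + Q * y = 0

namespace Polynomial

theorem exists_derivative_eq {K : Type*} [Field K] [CharZero K] (p : K[X]) :
    ∃ q : K[X], derivative q = p := by
  induction p using Polynomial.induction_on' with
  | add f g hf hg =>
    obtain ⟨qf, rfl⟩ := hf
    obtain ⟨qg, rfl⟩ := hg
    exact ⟨qf + qg, derivative_add⟩
  | monomial n c =>
    refine ⟨C (c / (n + 1)) * X ^ (n + 1), ?_⟩
    rw [derivative_C_mul_X_pow, Nat.add_sub_cancel, ← C_mul_X_pow_eq_monomial]
    push_cast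
    rw [div_mul_cancel₀ _ (Nat.cast_add_one_ne_zero n)]

section CommRing

variable {R : Type*} [CommRing R]

theorem wronskian_mul_right_self (y q : R[X]) :
    wronskian y (y * q) = y ^ 2 * derivative q := by
  rw [wronskian, derivative_mul]
  ring

theorem derivative_wronskian (a b : R[X]) :
    derivative (wronskian a b) = a * derivative (derivative b) - derivative (derivative a) * b := by
  rw [wronskian, derivative_sub, derivative_mul, derivative_mul]
  ring

theorem linearIndependent_of_wronskian_ne_zero [IsDomain R] {a b : R[X]}
    (hW : wronskian a b ≠ 0) : LinearIndependent R ![a, b] := by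
  rw [LinearIndependent.pair_iff]
  intro s t hst
  have hs := congrArg (fun f => wronskianBilin R f b) hst
  have ht := congrArg (fun f => wronskianBilin R a f) hst
  simp only [map_add, map_smul, LinearMap.add_apply, LinearMap.smul_apply, map_zero,
    LinearMap.zero_apply, wronskianBilin_apply, wronskian_self_eq_zero, smul_zero, add_zero,
    zero_add] at hs ht
  exact ⟨(smul_eq_zero.1 hs).resolve_right hW, (smul_eq_zero.1 ht).resolve_right hW⟩

end CommRing

end Polynomial

namespace IsFuchsianSolution

section CommRing

variable {R : Type*} [CommRing R] {A Q y : R[X]}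

theorem exists_pow_mul_iterate_derivative_eq (hy : IsFuchsianSolution A Q y) (k : ℕ) :
    ∃ f g : R[X], A ^ k * derivative^[k] y = f * y + g * derivative y := by
  unfold IsFuchsianSolution at hy
  induction k with
  | zero => exact ⟨1, 0, by simp⟩
  | succ k ih =>
    obtain ⟨f, g, hk⟩ := ih
    have hd := congrArg derivative hk
    simp only [derivative_mul, derivative_add] at hd
    have hpow : A * derivative (A ^ k) = C (k : R) * derivative A * A ^ k := by
      rw [derivative_pow]
      cases k with
      | zero => simp
      | succ m => rw [Nat.add_sub_cancel, pow_succ]; ring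
    refine ⟨A * derivative f - g * Q - C (k : R) * derivative A * f,
      A * f + A * derivative g + g * derivative A - C (k : R) * derivative A * g, ?_⟩
    rw [Function.iterate_succ_apply', pow_succ]
    linear_combination A * hd - derivative^[k] y * hpow - C (k : R) * derivative A * hk + g * hy

theorem of_wronskian_eq [NoZeroDivisors R] {y₂ : R[X]} (hy : IsFuchsianSolution A Q y)
    (hy₀ : y ≠ 0) (hW : wronskian y y₂ = A) : IsFuchsianSolution A Q y₂ := by
  have hW' := congrArg derivative hW
  rw [derivative_wronskian] at hW'
  rw [wronskian] at hW
  unfold IsFuchsianSolution at hy ⊢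
  refine (mul_eq_zero.1 ?_).resolve_left hy₀
  linear_combination A * hW' - derivative A * hW + y₂ * hy

theorem eval_derivative_ne_zero [NoZeroDivisors R] [CharZero R] (hy : IsFuchsianSolution A Q y)
    (hy₀ : y ≠ 0) {b : R} (hA : A.eval b ≠ 0) (hb : y.IsRoot b) : (derivative y).eval b ≠ 0 := by
  intro hb'
  have hder (k : ℕ) : (derivative^[k] y).IsRoot b := by
    obtain ⟨f, g, hk⟩ := hy.exists_pow_mul_iterate_derivative_eq k
    have hkb := congrArg (eval b) hk
    simp only [eval_mul, eval_add, eval_pow, hb.eq_zero, hb', mul_zero, add_zero] at hkb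
    exact (mul_eq_zero.1 hkb).resolve_left (pow_ne_zero k hA)
  exact ((lt_rootMultiplicity_iff_isRoot_iterate_derivative hy₀).2 fun m _ => hder m).false

end CommRing

section Field

variable {K : Type*} [Field K] [CharZero K] {A Q y : K[X]}

theorem isCoprime_derivative [IsAlgClosed K] (hy : IsFuchsianSolution A Q y) (hy₀ : y ≠ 0)
    (hA : ∀ b, y.IsRoot b → A.eval b ≠ 0) : IsCoprime y (derivative y) := by
  rw [isCoprime_iff_aeval_ne_zero_of_isAlgClosed K K]
  intro b
  simp only [coe_aeval_eq_eval, or_iff_not_imp_left, not_not]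
  exact fun hb => hy.eval_derivative_ne_zero hy₀ (hA b hb) hb

theorem exists_wronskian_eq (hy : IsFuchsianSolution A Q y) (hcop : IsCoprime y (derivative y)) :
    ∃ y₂ : K[X], wronskian y y₂ = A := by
  obtain ⟨u, v, huv⟩ := id hcop
  unfold IsFuchsianSolution at hy
  have hr : derivative y * (A * u + derivative (A * v)) = y * (v * Q - A * derivative u) := by
    have huv' := congrArg derivative huv
    simp only [derivative_add, derivative_mul, derivative_one] at huv' ⊢
    linear_combination A * huv' - v * hy
  obtain ⟨s, hs⟩ : y ∣ A * u + derivative (A * v) := hcop.dvd_of_dvd_mul_left ⟨_, hr⟩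
  obtain ⟨q, hq⟩ := exists_derivative_eq s
  refine ⟨-(A * v) + y * q, ?_⟩
  rw [wronskian_add_right, wronskian_mul_right_self, hq, wronskian, derivative_neg]
  linear_combination A * huv - y * hs

end Field

end IsFuchsianSolution

theorem second_polynomial_solution_general
    (n : ℕ) (a : Fin n → ℂ)
    (Cp : Polynomial ℂ) (y₁ : Polynomial ℂ) (hy₁ : y₁ ≠ 0)
    (heq : (∏ j, (X - C (a j))) * derivative (derivative y₁)
        - derivative (∏ j, (X - C (a j))) * derivative y₁ + Cp * y₁ = 0)
    (hcop : ∀ z : ℂ, ¬ (y₁.IsRoot z ∧ (∏ j, (X - C (a j))).IsRoot z)) :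
    ∃ y₂ : Polynomial ℂ,
      (∏ j, (X - C (a j))) * derivative (derivative y₂)
        - derivative (∏ j, (X - C (a j))) * derivative y₂ + Cp * y₂ = 0 ∧
      LinearIndependent ℂ ![y₁, y₂] := by
  set A : ℂ[X] := ∏ j, (X - C (a j))
  have hsol : IsFuchsianSolution A Cp y₁ := heq
  have hA : A ≠ 0 := (monic_prod_of_monic _ _ fun j _ => monic_X_sub_C (a j)).ne_zero
  obtain ⟨y₂, hW⟩ := hsol.exists_wronskian_eq <|
    hsol.isCoprime_derivative hy₁ fun z hz hAz => hcop z ⟨hz, hAz⟩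
  exact ⟨y₂, hsol.of_wronskian_eq hy₁ hW, linearIndependent_of_wronskian_ne_zero (hW ▸ hA)⟩

/-- **Lemma 4.** Let `A = ∏ (X - a_j)` with `a_j` distinct. If the equation
`A y'' - A' y' + C y = 0` has a nonzero polynomial solution `y₁` sharing no root
with `A`, then it has a polynomial solution `y₂` linearly independent from `y₁`. -/
theorem second_polynomial_solution
    (n : ℕ) (a : Fin n → ℂ) (ha : Function.Injective a)
    (Cp : Polynomial ℂ) (y₁ : Polynomial ℂ) (hy₁ : y₁ ≠ 0)
    (heq : (∏ j, (X - C (a j))) * derivative (derivative y₁)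
        - derivative (∏ j, (X - C (a j))) * derivative y₁ + Cp * y₁ = 0)
    (hcop : ∀ z : ℂ, ¬ (y₁.IsRoot z ∧ (∏ j, (X - C (a j))).IsRoot z)) :
    ∃ y₂ : Polynomial ℂ,
      (∏ j, (X - C (a j))) * derivative (derivative y₂)
        - derivative (∏ j, (X - C (a j))) * derivative y₂ + Cp * y₂ = 0 ∧
      LinearIndependent ℂ ![y₁, y₂] :=
  second_polynomial_solution_general n a Cp y₁ hy₁ heq hcop
end

section
/- Let a₁,…,a_n ∈ ℂ be distinct and A = ∏_{j=1}^n (X − a_j). Let z₁,…,z_m ∈ ℂ be pairwise distinct points with z_k ≠ a_j for all k and j, and set y = ∏_{k=1}^m (X − z_k). Then y divides A·y″ − A′·y′ in ℂ[X] (equivalently, there exists C ∈ ℂ[X] with A·y″ − A′·y′ + C·y = 0) if and only if the equations 2·Σ_{j≠k} 1/(z_k − z_j) − Σ_{j=1}^n 1/(z_k − a_j) = 0 hold for every k = 1,…,m. -/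
/-!
Since `y = ∏ (X - z_k)` has simple roots, `y ∣ P` iff `P(z_k) = 0` for every `k`. Writing
`y = (X - z_k) q_k`, one has `y'(z_k) = q_k(z_k)` and `y''(z_k) = 2 q_k'(z_k)`, and the logarithmic
derivatives `q_k'/q_k` and `A'/A` at `z_k` are `Σ_{j≠k} 1/(z_k - z_j)` and `Σ_j 1/(z_k - a_j)`.
Hence `(A y'' - A' y')(z_k) = A(z_k) q_k(z_k) (2 Σ_{j≠k} 1/(z_k - z_j) - Σ_j 1/(z_k - a_j))`,
and the prefactor does not vanish.
-/

open Polynomial Finset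

namespace Polynomial

variable {R K ι : Type*} [CommRing R] [Field K]

theorem prod_X_sub_C_dvd_iff_forall_isRoot [Fintype ι] {w : ι → K} (hw : Function.Injective w)
    (p : K[X]) : (∏ i, (X - C (w i))) ∣ p ↔ ∀ i, p.IsRoot (w i) := by
  constructor
  · exact fun h i =>
      dvd_iff_isRoot.mp ((dvd_prod_of_mem (fun i => X - C (w i)) (mem_univ i)).trans h)
  · exact fun h => Fintype.prod_dvd_of_coprime (pairwise_coprime_X_sub_C hw)
      fun i => dvd_iff_isRoot.mpr (h i)

theorem eval_derivative_prod_X_sub_C [DecidableEq ι] (s : Finset ι) (w : ι → K) {x : K}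
    (hx : ∀ i ∈ s, x ≠ w i) :
    eval x (derivative (∏ i ∈ s, (X - C (w i)))) =
      (∑ i ∈ s, (x - w i)⁻¹) * ∏ i ∈ s, (x - w i) := by
  rw [derivative_prod_finset, eval_finsetSum, sum_mul]
  refine sum_congr rfl fun i hi => ?_
  simp only [derivative_X_sub_C, mul_one, eval_prod, eval_sub, eval_X, eval_C]
  rw [← mul_prod_erase _ _ hi, inv_mul_cancel_left₀ (sub_ne_zero.mpr (hx i hi))]

theorem eval_derivative_X_sub_C_mul (c : R) (q : R[X]) :
    eval c (derivative ((X - C c) * q)) = eval c q := by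
  simp [derivative_mul]

theorem eval_derivative_derivative_X_sub_C_mul (c : R) (q : R[X]) :
    eval c (derivative (derivative ((X - C c) * q))) = 2 * eval c (derivative q) := by
  simp only [derivative_mul, derivative_X_sub_C, one_mul, derivative_add, eval_add, eval_mul,
    eval_sub, eval_X, eval_C, sub_self]
  ring

end Polynomial

theorem stieltjes_equilibrium_iff_general
    (n m : ℕ) (a : Fin n → ℂ)
    (z : Fin m → ℂ) (hz : Function.Injective z) (hza : ∀ k j, z k ≠ a j) :
    (∏ k, (X - C (z k))) ∣
        ((∏ j, (X - C (a j))) * derivative (derivative (∏ k, (X - C (z k))))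
          - derivative (∏ j, (X - C (a j))) * derivative (∏ k, (X - C (z k)))) ↔
      ∀ k, 2 * ∑ j ∈ Finset.univ.erase k, (z k - z j)⁻¹
            - ∑ j, (z k - a j)⁻¹ = 0 := by
  rw [prod_X_sub_C_dvd_iff_forall_isRoot hz]
  refine forall_congr' fun k => ?_
  have hzk : ∀ i ∈ univ.erase k, z k ≠ z i := fun i hi => hz.ne (ne_of_mem_erase hi).symm
  have hA : ∏ j, (z k - a j) ≠ 0 := prod_ne_zero_iff.mpr fun j _ => sub_ne_zero.mpr (hza k j)
  have hq : ∏ i ∈ univ.erase k, (z k - z i) ≠ 0 :=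
    prod_ne_zero_iff.mpr fun i hi => sub_ne_zero.mpr (hzk i hi)
  rw [← mul_prod_erase univ (fun i => X - C (z i)) (mem_univ k), IsRoot.def, eval_sub,
    eval_mul, eval_mul, eval_derivative_X_sub_C_mul, eval_derivative_derivative_X_sub_C_mul,
    eval_derivative_prod_X_sub_C _ _ hzk, eval_derivative_prod_X_sub_C _ _ fun j _ => hza k j]
  simp only [eval_prod, eval_sub, eval_X, eval_C]
  rw [← mul_eq_zero_iff_left (mul_ne_zero hA hq) (b := 2 * _ - _)]
  ring_nf

/-- **Stieltjes' equilibrium conditions.** With `A = ∏_j (X - a_j)` and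
`y = ∏_k (X - z_k)` (the `z_k` pairwise distinct and distinct from the `a_j`),
`y` divides `A y'' - A' y'` iff
`2 Σ_{j≠k} 1/(z_k - z_j) - Σ_j 1/(z_k - a_j) = 0` for every `k`. -/
theorem stieltjes_equilibrium_iff
    (n m : ℕ) (a : Fin n → ℂ) (ha : Function.Injective a)
    (z : Fin m → ℂ) (hz : Function.Injective z) (hza : ∀ k j, z k ≠ a j) :
    (∏ k, (X - C (z k))) ∣
        ((∏ j, (X - C (a j))) * derivative (derivative (∏ k, (X - C (z k))))
          - derivative (∏ j, (X - C (a j))) * derivative (∏ k, (X - C (z k)))) ↔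
      ∀ k, 2 * ∑ j ∈ Finset.univ.erase k, (z k - z j)⁻¹
            - ∑ j, (z k - a j)⁻¹ = 0 :=
  stieltjes_equilibrium_iff_general n m a z hz hza
end

section
/- Let ε be an admissible function, let T = T(n,ε) ⊂ ℝⁿ be the corresponding thorn with coordinates (x₁,…,x_n), and let U ⊆ ℝ^{n+1} (with coordinates (x₀,x₁,…,x_n)) be an open set containing {0} × T, i.e., containing every point (0, x₁,…,x_n) with (x₁,…,x_n) ∈ T. Then there exists an admissible function ε₁ such that the (n+1)-dimensional thorn T(n+1,ε₁) = {(x₀,…,x_n) : 0 < x_n < ε₁(1) and 0 < x_k < ε₁(x_{k+1}) for 0 ≤ k ≤ n−1} is contained in U ∩ {(x₀,…,x_n) : x_i > 0 for all i}. -/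
/-!
Replace `ε` by `x ↦ ε (x / 2)`. For `t > 0`, the closure `K t` of the shrunken thorn truncated
to `{y | ∀ i, t ≤ y i}` is compact and still lies in `T(n, ε)`, so `{0} × K t` has a positive
margin `r t` inside `U`, which can be chosen increasing in `t`. An admissible `ε₁` below both
`x ↦ ε (x / 2)` and `r` works: a point `p` of the new thorn is increasing, so its tail lies in
`K (p 1)`, and `p` is at distance `p 0 < ε₁ (p 1) ≤ r (p 1)` from `(0, tail p)`.
-/

/-- A function `ε : [0,1] → ℝ` is admissible if `ε 0 = 0`, `ε` is increasing on
`[0,1]`, and `0 < ε x < x` for `x ∈ (0,1]`. -/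
def Admissible (ε : ℝ → ℝ) : Prop :=
  ε 0 = 0 ∧ StrictMonoOn ε (Set.Icc 0 1) ∧
    ∀ x ∈ Set.Ioc (0 : ℝ) 1, 0 < ε x ∧ ε x < x

/-- The thorn `T(n, ε) ⊆ ℝⁿ`: the set of `(y₁, …, y_n)` with `0 < y_n < ε 1` and
`0 < y_k < ε y_{k+1}` for `1 ≤ k ≤ n - 1` (index `i : Fin n` represents `y_{i+1}`,
so index `0` is the innermost coordinate). -/
def Thorn (n : ℕ) (ε : ℝ → ℝ) : Set (Fin n → ℝ) :=
  {y | ∀ i : Fin n, 0 < y i ∧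
    y i < ε (if h : (i : ℕ) + 1 < n then y ⟨(i : ℕ) + 1, h⟩ else 1)}

open Set Filter Topology Metric

def thornOuter {m : ℕ} (y : Fin m → ℝ) (i : Fin m) : ℝ :=
  if h : (i : ℕ) + 1 < m then y ⟨(i : ℕ) + 1, h⟩ else 1

section thornOuter

variable {m : ℕ}

lemma thornOuter_of_lt {y : Fin m → ℝ} {i : Fin m} (h : (i : ℕ) + 1 < m) :
    thornOuter y i = y ⟨(i : ℕ) + 1, h⟩ :=
  dif_pos h

lemma thornOuter_mem {S : Set ℝ} (h1 : (1 : ℝ) ∈ S) {y : Fin m → ℝ} (hy : ∀ j, y j ∈ S)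
    (i : Fin m) : thornOuter y i ∈ S := by
  unfold thornOuter
  split_ifs
  exacts [hy _, h1]

lemma continuous_thornOuter (i : Fin m) : Continuous fun y : Fin m → ℝ => thornOuter y i := by
  unfold thornOuter
  split_ifs
  exacts [continuous_apply _, continuous_const]

lemma thornOuter_castSucc (y : Fin (m + 1) → ℝ) (i : Fin m) :
    thornOuter y i.castSucc = y i.succ := by
  simp [thornOuter, Fin.succ]

lemma mem_thorn_iff {ε : ℝ → ℝ} {y : Fin m → ℝ} :
    y ∈ Thorn m ε ↔ ∀ i, 0 < y i ∧ y i < ε (thornOuter y i) :=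
  Iff.rfl

lemma thornOuter_tail (p : Fin (m + 1) → ℝ) (i : Fin m) :
    thornOuter (Fin.tail p) i = thornOuter p i.succ := by
  simp only [thornOuter, Fin.val_succ, Fin.tail, add_lt_add_iff_right]
  split_ifs <;> rfl

end thornOuter

namespace Admissible

variable {ε : ℝ → ℝ}

lemma comp_mul (hε : Admissible ε) {c : ℝ} (hc₀ : 0 < c) (hc₁ : c ≤ 1) :
    Admissible fun x => ε (c * x) := by
  obtain ⟨h0, hmono, hlt⟩ := hε
  refine ⟨by simpa using h0, fun a ha b hb hab => ?_, fun x hx => ?_⟩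
  · have hmem : ∀ x ∈ Icc (0 : ℝ) 1, c * x ∈ Icc (0 : ℝ) 1 := fun x hx =>
      ⟨by nlinarith [hx.1], by nlinarith [hx.1, hx.2]⟩
    exact hmono (hmem a ha) (hmem b hb) (by gcongr)
  · have hcx : c * x ∈ Ioc (0 : ℝ) 1 := ⟨by nlinarith [hx.1], by nlinarith [hx.1, hx.2]⟩
    exact ⟨(hlt _ hcx).1, (hlt _ hcx).2.trans_le (by nlinarith [hx.1])⟩

/-- The factor `x` in `x * min (ε x) (f x)` is what makes the new function strictly increasing
even where `min (ε x) (f x)` is only monotone. -/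
lemma exists_le_min (hε : Admissible ε) {f : ℝ → ℝ} (hf : MonotoneOn f (Ioc 0 1))
    (hf₀ : ∀ x ∈ Ioc (0 : ℝ) 1, 0 < f x) :
    ∃ ε' : ℝ → ℝ, Admissible ε' ∧ ∀ x ∈ Ioc (0 : ℝ) 1, ε' x ≤ ε x ∧ ε' x ≤ f x := by
  obtain ⟨h0, hmono, hlt⟩ := hε
  set g : ℝ → ℝ := fun x => min (ε x) (f x)
  have hg_pos : ∀ x ∈ Ioc (0 : ℝ) 1, 0 < g x := fun x hx => lt_min (hlt x hx).1 (hf₀ x hx)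
  have hg_lt_one : ∀ x ∈ Ioc (0 : ℝ) 1, g x < 1 := fun x hx =>
    ((min_le_left _ _).trans_lt (hlt x hx).2).trans_le hx.2
  have hg_mono : MonotoneOn g (Ioc 0 1) := fun a ha b hb hab =>
    min_le_min (hmono.monotoneOn ⟨ha.1.le, ha.2⟩ ⟨hb.1.le, hb.2⟩ hab) (hf ha hb hab)
  refine ⟨fun x => if 0 < x then x * g x else 0, ⟨by simp, ?_, fun x hx => ?_⟩, fun x hx => ?_⟩
  · intro a ha b hb hab
    have hb' : b ∈ Ioc (0 : ℝ) 1 := ⟨ha.1.trans_lt hab, hb.2⟩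
    simp only [hb'.1, if_true]
    rcases ha.1.eq_or_lt with rfl | ha₀
    · simpa using mul_pos hb'.1 (hg_pos b hb')
    · simp only [ha₀, if_true]
      exact mul_lt_mul hab (hg_mono ⟨ha₀, ha.2⟩ hb' hab.le) (hg_pos a ⟨ha₀, ha.2⟩) hb'.1.le
  · simp only [hx.1, if_true]
    exact ⟨mul_pos hx.1 (hg_pos x hx), mul_lt_of_lt_one_right hx.1 (hg_lt_one x hx)⟩
  · simp only [hx.1, if_true]
    have hgx : x * g x ≤ g x := mul_le_of_le_one_left (hg_pos x hx).le hx.2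
    exact ⟨hgx.trans (min_le_left _ _), hgx.trans (min_le_right _ _)⟩

end Admissible

namespace Thorn

variable {m : ℕ} {ε : ℝ → ℝ}

lemma lt_one (hε : Admissible ε) {y : Fin m → ℝ} (hy : y ∈ Thorn m ε) (i : Fin m) : y i < 1 := by
  induction i using WellFoundedGT.induction with
  | _ i ih =>
  have hout : thornOuter y i ∈ Ioc 0 1 := by
    unfold thornOuter
    split_ifs with h
    · exact ⟨(hy _).1, (ih _ (Fin.lt_def.2 (Nat.lt_succ_self _))).le⟩
    · exact ⟨one_pos, le_rfl⟩
  exact ((hy i).2.trans (hε.2.2 _ hout).2).trans_le hout.2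

lemma thornOuter_mem_Ioc (hε : Admissible ε) {y : Fin m → ℝ} (hy : y ∈ Thorn m ε) (i : Fin m) :
    thornOuter y i ∈ Ioc 0 1 :=
  thornOuter_mem (S := Ioc 0 1) ⟨one_pos, le_rfl⟩ (fun j => ⟨(hy j).1, (lt_one hε hy j).le⟩) i

lemma lt_thornOuter (hε : Admissible ε) {y : Fin m → ℝ} (hy : y ∈ Thorn m ε) (i : Fin m) :
    y i < thornOuter y i :=
  (hy i).2.trans (hε.2.2 _ (thornOuter_mem_Ioc hε hy i)).2

lemma strictMono (hε : Admissible ε) {y : Fin m → ℝ} (hy : y ∈ Thorn m ε) : StrictMono y := by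
  obtain _ | m := m
  · exact fun i => i.elim0
  · refine Fin.strictMono_iff_lt_succ.2 fun i => ?_
    simpa [thornOuter_castSucc] using lt_thornOuter hε hy i.castSucc

lemma thornOuter_le (hε : Admissible ε) {y : Fin m → ℝ} (hy : y ∈ Thorn m ε) {i j : Fin m}
    (hij : i < j) : thornOuter y i ≤ y j := by
  rw [thornOuter_of_lt (lt_of_le_of_lt hij j.isLt)]
  exact (strictMono hε hy).monotone (Fin.le_def.2 hij)

lemma mono {ε' : ℝ → ℝ} (hε : Admissible ε) (h : ∀ x ∈ Ioc (0 : ℝ) 1, ε x ≤ ε' x) :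
    Thorn m ε ⊆ Thorn m ε' := fun _ hy i =>
  ⟨(hy i).1, (hy i).2.trans_le (h _ (thornOuter_mem_Ioc hε hy i))⟩

lemma tail_mem {p : Fin (m + 1) → ℝ} (hp : p ∈ Thorn (m + 1) ε) : Fin.tail p ∈ Thorn m ε :=
  mem_thorn_iff.2 fun i => by
    rw [thornOuter_tail]
    exact mem_thorn_iff.1 hp i.succ

lemma inter_Ici_subset_Icc (hε : Admissible ε) (t : ℝ) :
    Thorn m ε ∩ Ici (fun _ => t) ⊆ Icc (fun _ => t) (1 : Fin m → ℝ) :=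
  fun _ hy => ⟨hy.2, fun i => (lt_one hε hy.1 i).le⟩

lemma isCompact_closure_inter_Ici (hε : Admissible ε) (t : ℝ) :
    IsCompact (closure (Thorn m ε ∩ Ici fun _ => t)) :=
  isCompact_Icc.of_isClosed_subset isClosed_closure
    (closure_minimal (inter_Ici_subset_Icc hε t) isClosed_Icc)

end Thorn

/-- Near a limit point `y`, `c` times the outer coordinate stays below some `a` smaller than the
outer coordinate `s` of `y`, so `y i ≤ ε a < ε s`. -/
lemma closure_thorn_comp_mul_inter_Ici_subset {m : ℕ} {ε : ℝ → ℝ} (hε : Admissible ε)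
    {c : ℝ} (hc₀ : 0 < c) (hc₁ : c < 1) {t : ℝ} (ht : 0 < t) :
    closure (Thorn m (fun x => ε (c * x)) ∩ Ici fun _ => t) ⊆ Thorn m ε := by
  intro y hy
  have hyI : y ∈ Icc (fun _ => t) (1 : Fin m → ℝ) :=
    closure_minimal (Thorn.inter_Ici_subset_Icc (hε.comp_mul hc₀ hc₁.le) t) isClosed_Icc hy
  have hy_pos : ∀ j, 0 < y j := fun j => ht.trans_le (hyI.1 j)
  refine mem_thorn_iff.2 fun i => ⟨hy_pos i, ?_⟩
  set s := thornOuter y i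
  have hs : s ∈ Ioc 0 1 := thornOuter_mem (S := Ioc 0 1) ⟨one_pos, le_rfl⟩
    (fun j => ⟨hy_pos j, hyI.2 j⟩) i
  obtain ⟨a, hca, has⟩ := exists_between (mul_lt_of_lt_one_left hs.1 hc₁)
  have ha : a ∈ Icc (0 : ℝ) 1 := ⟨(mul_nonneg hc₀.le hs.1.le).trans hca.le, has.le.trans hs.2⟩
  have hnear : ∀ᶠ z in 𝓝 y, c * thornOuter z i < a :=
    ((continuous_const.mul (continuous_thornOuter i)).tendsto y).eventually (gt_mem_nhds hca)
  have hfreq : ∃ᶠ z in 𝓝 y, z ∈ {z : Fin m → ℝ | z i ≤ ε a} := by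
    refine ((mem_closure_iff_frequently.1 hy).and_eventually hnear).mono fun z ⟨hz, hza⟩ => ?_
    have hz_out : 0 < thornOuter z i :=
      thornOuter_mem (S := Ioi 0) (mem_Ioi.2 one_pos) (fun j => (hz.1 j).1) i
    have harg : c * thornOuter z i ∈ Icc (0 : ℝ) 1 :=
      ⟨mul_nonneg hc₀.le hz_out.le, hza.le.trans ha.2⟩
    exact ((mem_thorn_iff.1 hz.1 i).2.trans_le (hε.2.1.monotoneOn harg ha hza.le)).le
  have hya : y i ≤ ε a := hfreq.mem_of_closed (isClosed_le (continuous_apply i) continuous_const)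
  exact hya.trans_lt (hε.2.1 ha ⟨hs.1.le, hs.2⟩ has)

/-- The margin at `t` is the largest `δ ≤ 1` whose thickening of `K t` stays in `U`; it grows with
`t` because `K` shrinks. -/
lemma exists_monotone_forall_ball_subset {ι X : Type*} [Preorder ι] [PseudoMetricSpace X]
    {K : ι → Set X} (hK : Antitone K) (U : Set X) :
    ∃ r : ι → ℝ, Monotone r ∧ (∀ t, ∀ x ∈ K t, ball x (r t) ⊆ U) ∧
      ∀ t, ∀ δ > 0, thickening δ (K t) ⊆ U → 0 < r t := by
  set S : ι → Set ℝ := fun t => {δ | δ ≤ 1 ∧ thickening δ (K t) ⊆ U}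
  have hS_bdd : ∀ t, BddAbove (S t) := fun t => ⟨1, fun _ hδ => hδ.1⟩
  have hS_zero : ∀ t, (0 : ℝ) ∈ S t := fun t =>
    ⟨zero_le_one, by simp [thickening_of_nonpos le_rfl]⟩
  refine ⟨fun t => sSup (S t), fun s t hst => ?_, fun t x hx y hy => ?_, fun t δ hδ hδU => ?_⟩
  · exact csSup_le_csSup (hS_bdd t) ⟨0, hS_zero s⟩
      fun δ hδ => ⟨hδ.1, (thickening_subset_of_subset δ (hK hst)).trans hδ.2⟩
  · obtain ⟨δ, hδS, hyδ⟩ := exists_lt_of_lt_csSup ⟨0, hS_zero t⟩ (mem_ball.1 hy)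
    exact hδS.2 (mem_thickening_iff.2 ⟨x, hx, hyδ⟩)
  · exact (lt_min hδ one_pos).trans_le (le_csSup (hS_bdd t)
      ⟨min_le_right _ _, (thickening_mono (min_le_left _ _) _).trans hδU⟩)

lemma dist_finCons_finCons {X : Type*} [PseudoMetricSpace X] {m : ℕ} (a b : X) (x : Fin m → X) :
    dist (Fin.cons a x : Fin (m + 1) → X) (Fin.cons b x) = dist a b :=
  le_antisymm ((dist_pi_le_iff dist_nonneg).2 (Fin.cases (by simp) (by simp)))
    (by simpa using dist_le_pi_dist (Fin.cons a x : Fin (m + 1) → X) (Fin.cons b x) 0)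

/-- **Lemma 2.** If `U ⊆ ℝ^{n+1}` is an open set containing `{0} × T(n, ε)`
(the extra coordinate `x₀` being the innermost one), then `U` intersected with the
open positive orthant contains an `(n+1)`-dimensional thorn. -/
theorem thorn_in_half_neighborhood
    (n : ℕ) (ε : ℝ → ℝ) (hε : Admissible ε)
    (U : Set (Fin (n + 1) → ℝ)) (hU : IsOpen U)
    (hTU : ∀ x ∈ Thorn n ε, Fin.cons 0 x ∈ U) :
    ∃ ε₁ : ℝ → ℝ, Admissible ε₁ ∧
      Thorn (n + 1) ε₁ ⊆ U ∩ {p : Fin (n + 1) → ℝ | ∀ i, 0 < p i} := by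
  have hε' : Admissible fun x => ε (1 / 2 * x) := hε.comp_mul (by norm_num) (by norm_num)
  set K : ℝ → Set (Fin n → ℝ) := fun t =>
    closure (Thorn n (fun x => ε (1 / 2 * x)) ∩ Ici fun _ => t)
  have hK_anti : Antitone K := fun s t hst =>
    closure_mono (inter_subset_inter_right _ (Ici_subset_Ici.2 fun _ => hst))
  obtain ⟨r, hr_mono, hr_ball, hr_pos⟩ := exists_monotone_forall_ball_subset
    (fun s t hst => image_mono (hK_anti hst) : Antitone fun t => Fin.cons 0 '' K t) U
  have hr_pos_Ioc : ∀ t ∈ Ioc (0 : ℝ) 1, 0 < r t := by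
    intro t ht
    have hKU : Fin.cons 0 '' K t ⊆ U := image_subset_iff.2 fun y hy =>
      hTU y (closure_thorn_comp_mul_inter_Ici_subset hε (by norm_num) (by norm_num) ht.1 hy)
    obtain ⟨δ, hδ, hδU⟩ := ((Thorn.isCompact_closure_inter_Ici hε' t).image
      (continuous_const.finCons continuous_id)).exists_thickening_subset_open hU hKU
    exact hr_pos t δ hδ hδU
  obtain ⟨ε₁, hε₁, hε₁_le⟩ := hε'.exists_le_min (hr_mono.monotoneOn _) hr_pos_Ioc
  refine ⟨ε₁, hε₁, fun p hp => ⟨?_, fun i => (hp i).1⟩⟩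
  set t := thornOuter p 0
  have ht : t ∈ Ioc 0 1 := Thorn.thornOuter_mem_Ioc hε₁ hp 0
  have htail : Fin.tail p ∈ K t := subset_closure
    ⟨Thorn.mono hε₁ (fun x hx => (hε₁_le x hx).1) (Thorn.tail_mem hp),
      fun i => Thorn.thornOuter_le hε₁ hp (Fin.succ_pos i)⟩
  refine hr_ball t _ ⟨_, htail, rfl⟩ (mem_ball.2 ?_)
  have hp0 : p 0 < r t := ((mem_thorn_iff.1 hp 0).2).trans_le (hε₁_le t ht).2
  have hdist := dist_finCons_finCons (p 0) 0 (Fin.tail p)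
  rw [Fin.cons_self_tail] at hdist
  rwa [hdist, Real.dist_eq, sub_zero, abs_of_pos (hp 0).1]
end

section
/- Fix d ≥ 1. Let q, g₁, g₂ ∈ ℂ[X] with g₁ and g₂ coprime and g₂ ≠ 0, and let (f_{1,m})_m and (f_{2,m})_m be sequences of complex polynomials of degree at most d such that f_{1,m} → q·g₁ and f_{2,m} → q·g₂ coefficientwise as m → ∞. Then for every compact set K ⊂ ℂ containing no root of q and no root of g₂, there is M such that for all m ≥ M the polynomial f_{2,m} has no zero on K, and the functions z ↦ f_{1,m}(z)/f_{2,m}(z) converge to z ↦ g₁(z)/g₂(z) uniformly on K. -/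
open Polynomial Filter

/-- Coefficientwise convergence with uniformly bounded degree gives locally uniform
convergence of the evaluation maps. -/
lemma aux_unif_eval (d : ℕ) (p : Polynomial ℂ) (f : ℕ → Polynomial ℂ)
    (hdeg : ∀ m, (f m).degree ≤ (d : WithBot ℕ))
    (hc : ∀ j : ℕ, Tendsto (fun m => (f m).coeff j) atTop (nhds (p.coeff j)))
    (K : Set ℂ) (hK : IsCompact K) :
    TendstoUniformlyOn (fun m z => (f m).eval z) (fun z => p.eval z) atTop K := by
  obtain ⟨R, hR⟩ := hK.isBounded.exists_norm_le
  set B : ℝ := max R 1 with hB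
  have hB1 : (1 : ℝ) ≤ B := le_max_right _ _
  have hB0 : (0 : ℝ) < B := lt_of_lt_of_le one_pos hB1
  set n : ℕ := max (p.natDegree + 1) (d + 1) with hn
  have hpn : p.natDegree < n := lt_of_lt_of_le (Nat.lt_succ_self _) (le_max_left _ _)
  have hfn : ∀ m, (f m).natDegree < n := fun m =>
    lt_of_le_of_lt (Polynomial.natDegree_le_iff_degree_le.mpr (hdeg m))
      (lt_of_lt_of_le (Nat.lt_succ_self _) (le_max_right _ _))
  rw [Metric.tendstoUniformlyOn_iff]
  intro ε hε
  set δ : ℝ := ε / (n * B ^ n + 1) with hδdef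
  have hden : (0 : ℝ) < n * B ^ n + 1 := by positivity
  have hδ : 0 < δ := div_pos hε hden
  have hev : ∀ᶠ m in atTop, ∀ j ∈ Finset.range n,
      dist ((f m).coeff j) (p.coeff j) < δ := by
    rw [eventually_all_finset]
    intro j _
    exact (Metric.tendsto_nhds.mp (hc j)) δ hδ
  filter_upwards [hev] with m hm z hz
  have hzB : ‖z‖ ≤ B := le_trans (hR z hz) (le_max_left _ _)
  rw [Polynomial.eval_eq_sum_range' hpn, Polynomial.eval_eq_sum_range' (hfn m)]
  rw [dist_eq_norm, ← Finset.sum_sub_distrib]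
  have hbound : ∀ j ∈ Finset.range n,
      ‖p.coeff j * z ^ j - (f m).coeff j * z ^ j‖ ≤ δ * B ^ n := by
    intro j hj
    rw [← sub_mul, norm_mul, norm_pow]
    have h1 : ‖p.coeff j - (f m).coeff j‖ ≤ δ := by
      have := hm j hj
      rw [dist_eq_norm] at this
      rw [norm_sub_rev]
      exact this.le
    have h2 : ‖z‖ ^ j ≤ B ^ n := by
      calc ‖z‖ ^ j ≤ B ^ j := pow_le_pow_left₀ (norm_nonneg z) hzB j
        _ ≤ B ^ n := pow_le_pow_right₀ hB1 (Finset.mem_range.mp hj).le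
    exact mul_le_mul h1 h2 (by positivity) hδ.le
  calc ‖∑ j ∈ Finset.range n, (p.coeff j * z ^ j - (f m).coeff j * z ^ j)‖
      ≤ ∑ j ∈ Finset.range n, ‖p.coeff j * z ^ j - (f m).coeff j * z ^ j‖ :=
        norm_sum_le _ _
    _ ≤ ∑ _j ∈ Finset.range n, δ * B ^ n := Finset.sum_le_sum hbound
    _ = n * (δ * B ^ n) := by rw [Finset.sum_const, Finset.card_range, nsmul_eq_mul]
    _ < ε := by
        have h1 : (n : ℝ) * (δ * B ^ n) = δ * (n * B ^ n) := by ring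
        rw [h1]
        calc δ * ((n : ℝ) * B ^ n) < δ * ((n : ℝ) * B ^ n + 1) :=
              mul_lt_mul_of_pos_left (lt_add_one _) hδ
          _ = ε := by rw [hδdef]; field_simp

/-- **Proposition 1.** If `f_{1,m} → q g₁` and `f_{2,m} → q g₂` coefficientwise,
with degrees uniformly at most `d`, `g₁, g₂` coprime and `g₂ ≠ 0`, then on any
compact set `K` avoiding the roots of `q` and of `g₂`, eventually `f_{2,m}` has no
zero on `K` and `f_{1,m}/f_{2,m} → g₁/g₂` uniformly on `K`. -/
theorem rational_functions_converge_away_from_common_roots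
    (d : ℕ) (hd : 1 ≤ d) (q g₁ g₂ : Polynomial ℂ)
    (hcop : IsCoprime g₁ g₂) (hg₂ : g₂ ≠ 0)
    (f₁ f₂ : ℕ → Polynomial ℂ)
    (hdeg₁ : ∀ m, (f₁ m).degree ≤ (d : WithBot ℕ))
    (hdeg₂ : ∀ m, (f₂ m).degree ≤ (d : WithBot ℕ))
    (hc₁ : ∀ j : ℕ, Tendsto (fun m => (f₁ m).coeff j) atTop (nhds ((q * g₁).coeff j)))
    (hc₂ : ∀ j : ℕ, Tendsto (fun m => (f₂ m).coeff j) atTop (nhds ((q * g₂).coeff j)))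
    (K : Set ℂ) (hK : IsCompact K)
    (hKq : ∀ z ∈ K, ¬ q.IsRoot z) (hKg : ∀ z ∈ K, ¬ g₂.IsRoot z) :
    ∃ M : ℕ, (∀ m, M ≤ m → ∀ z ∈ K, (f₂ m).eval z ≠ 0) ∧
      TendstoUniformlyOn (fun m z => (f₁ m).eval z / (f₂ m).eval z)
        (fun z => g₁.eval z / g₂.eval z) atTop K := by
  rcases K.eq_empty_or_nonempty with rfl | hne
  · exact ⟨0, fun _ _ z hz => absurd hz (Set.notMem_empty z), tendstoUniformlyOn_empty⟩
  set P₁ := q * g₁ with hP₁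
  set P₂ := q * g₂ with hP₂def
  have hU1 := aux_unif_eval d P₁ f₁ hdeg₁ hc₁ K hK
  have hU2 := aux_unif_eval d P₂ f₂ hdeg₂ hc₂ K hK
  have hP₂ne : ∀ z ∈ K, P₂.eval z ≠ 0 := by
    intro z hz
    rw [hP₂def, Polynomial.eval_mul]
    exact mul_ne_zero (hKq z hz) (hKg z hz)
  -- positive lower bound for ‖P₂.eval‖ on K
  obtain ⟨z₀, hz₀K, hmin'⟩ := hK.exists_isMinOn hne P₂.continuous.norm.continuousOn
  have hmin := isMinOn_iff.mp hmin'
  set ε₀ : ℝ := ‖P₂.eval z₀‖ with hε₀def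
  have hε₀ : 0 < ε₀ := norm_pos_iff.mpr (hP₂ne z₀ hz₀K)
  have hlow : ∀ z ∈ K, ε₀ ≤ ‖P₂.eval z‖ := fun z hz => hmin z hz
  -- upper bounds for ‖P₁.eval‖ and ‖P₂.eval‖ on K
  obtain ⟨z₁, hz₁K, hmax1'⟩ := hK.exists_isMaxOn hne P₁.continuous.norm.continuousOn
  have hmax1 := isMaxOn_iff.mp hmax1'
  obtain ⟨z₂, hz₂K, hmax2'⟩ := hK.exists_isMaxOn hne P₂.continuous.norm.continuousOn
  have hmax2 := isMaxOn_iff.mp hmax2'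
  set C : ℝ := ‖P₁.eval z₁‖ + ‖P₂.eval z₂‖ + 1 with hCdef
  have hC0 : 0 < C := by positivity
  have hCb1 : ∀ z ∈ K, ‖P₁.eval z‖ ≤ C := fun z hz =>
    le_trans (hmax1 z hz) (by have := norm_nonneg (P₂.eval z₂); simp only [hCdef]; linarith)
  have hCb2 : ∀ z ∈ K, ‖P₂.eval z‖ ≤ C := fun z hz =>
    le_trans (hmax2 z hz) (by have := norm_nonneg (P₁.eval z₁); simp only [hCdef]; linarith)
  -- eventually the denominators are bounded below on K
  have hF₂ : ∀ᶠ m in atTop, ∀ z ∈ K, ε₀ / 2 ≤ ‖(f₂ m).eval z‖ := by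
    filter_upwards [Metric.tendstoUniformlyOn_iff.mp hU2 (ε₀ / 2) (by positivity)]
      with m hm z hz
    have h1 := hm z hz
    rw [dist_eq_norm] at h1
    have h2 := hlow z hz
    have h3 := norm_sub_norm_le (P₂.eval z) ((f₂ m).eval z)
    linarith
  have hF₂ne : ∀ᶠ m in atTop, ∀ z ∈ K, (f₂ m).eval z ≠ 0 := by
    filter_upwards [hF₂] with m hm z hz
    have := hm z hz
    intro h
    rw [h, norm_zero] at this
    linarith
  obtain ⟨M, hM⟩ := eventually_atTop.mp hF₂ne
  refine ⟨M, hM, ?_⟩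
  rw [Metric.tendstoUniformlyOn_iff]
  intro ε hε
  set δ : ℝ := min (ε₀ / 2) (ε * ε₀ ^ 2 / (8 * C)) with hδdef
  have hδ0 : 0 < δ := lt_min (by positivity) (by positivity)
  filter_upwards [Metric.tendstoUniformlyOn_iff.mp hU1 δ hδ0,
    Metric.tendstoUniformlyOn_iff.mp hU2 δ hδ0, hF₂] with m hm1 hm2 hmlow z hz
  set F₁ : ℂ := (f₁ m).eval z
  set F₂ : ℂ := (f₂ m).eval z
  set p₁ : ℂ := P₁.eval z
  set p₂ : ℂ := P₂.eval z
  have hp₂ : p₂ ≠ 0 := hP₂ne z hz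
  have hF₂z : F₂ ≠ 0 := by
    intro h
    have := hmlow z hz
    rw [show F₂ = (f₂ m).eval z from rfl] at h
    rw [h, norm_zero] at this
    linarith
  have htarget : g₁.eval z / g₂.eval z = p₁ / p₂ := by
    show _ = P₁.eval z / P₂.eval z
    rw [hP₁, hP₂def, Polynomial.eval_mul, Polynomial.eval_mul,
      mul_div_mul_left _ _ (hKq z hz)]
  rw [htarget, dist_eq_norm, div_sub_div _ _ hp₂ hF₂z]
  have hnum : p₁ * F₂ - p₂ * F₁ = (p₁ - F₁) * p₂ + p₁ * (F₂ - p₂) := by ring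
  have hd1 : ‖p₁ - F₁‖ ≤ δ := by
    have := hm1 z hz; rw [dist_eq_norm] at this; exact this.le
  have hd2 : ‖F₂ - p₂‖ ≤ δ := by
    have := hm2 z hz; rw [dist_eq_norm, norm_sub_rev] at this; exact this.le
  have hnumb : ‖p₁ * F₂ - p₂ * F₁‖ ≤ 2 * C * δ := by
    rw [hnum]
    calc ‖(p₁ - F₁) * p₂ + p₁ * (F₂ - p₂)‖
        ≤ ‖(p₁ - F₁) * p₂‖ + ‖p₁ * (F₂ - p₂)‖ := norm_add_le _ _
      _ = ‖p₁ - F₁‖ * ‖p₂‖ + ‖p₁‖ * ‖F₂ - p₂‖ := by rw [norm_mul, norm_mul]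
      _ ≤ δ * C + C * δ := by
          gcongr
          all_goals
            first
            | exact hd1 | exact hd2 | exact hCb1 z hz | exact hCb2 z hz | positivity
      _ = 2 * C * δ := by ring
  have hdenb : ε₀ * (ε₀ / 2) ≤ ‖p₂ * F₂‖ := by
    rw [norm_mul]
    exact mul_le_mul (hlow z hz) (hmlow z hz) (by positivity) (norm_nonneg _)
  rw [norm_div]
  have hε₀2 : (0 : ℝ) < ε₀ * (ε₀ / 2) := by positivity
  calc ‖p₁ * F₂ - p₂ * F₁‖ / ‖p₂ * F₂‖
      ≤ 2 * C * δ / (ε₀ * (ε₀ / 2)) :=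
        div_le_div₀ (by positivity) hnumb hε₀2 hdenb
    _ ≤ 2 * C * (ε * ε₀ ^ 2 / (8 * C)) / (ε₀ * (ε₀ / 2)) := by
        gcongr
        exact min_le_right _ _
    _ = ε / 2 := by field_simp; ring
    _ < ε := by linarith
end

section
/- Fix d ≥ 2 and integers 0 ≤ k₁ < k₂ ≤ d. Suppose (q₁,q₂) and (r₁,r₂) are two pairs of real polynomials, each of the form q₁ = X^{d−1} + a_{1,d−2}X^{d−2} + … + a_{1,k₁}X^{k₁} and q₂ = X^{d} + a_{2,d−1}X^{d−1} + … + a_{2,k₂}X^{k₂} with all displayed coefficients a_{i,j} > 0. If the ℝ-linear span of {q₁, q₂} equals the ℝ-linear span of {r₁, r₂} in ℝ[X], then q₁ = r₁ and q₂ = r₂. -/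
open Polynomial

/-- The canonical shape of a pair `(q₁, q₂)`:
`q₁ = X^{d-1} + a_{1,d-2} X^{d-2} + … + a_{1,k₁} X^{k₁}` and
`q₂ = X^{d} + a_{2,d-1} X^{d-1} + … + a_{2,k₂} X^{k₂}`, with all displayed
coefficients positive. -/
def CanonShape (d k₁ k₂ : ℕ) (q₁ q₂ : Polynomial ℝ) : Prop :=
  q₁.natDegree = d - 1 ∧ q₁.coeff (d - 1) = 1 ∧
  (∀ j, k₁ ≤ j → j + 1 ≤ d - 1 → 0 < q₁.coeff j) ∧
  (∀ j, j < k₁ → q₁.coeff j = 0) ∧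
  q₂.natDegree = d ∧ q₂.coeff d = 1 ∧
  (∀ j, k₂ ≤ j → j + 1 ≤ d → 0 < q₂.coeff j) ∧
  (∀ j, j < k₂ → q₂.coeff j = 0)

/-- **Uniqueness of the canonical representation (\ref{canon}).** Two pairs of
real polynomials in canonical form spanning the same 2-plane of `ℝ[X]` are
equal. -/
theorem canonical_pair_unique
    (d k₁ k₂ : ℕ) (hd : 2 ≤ d) (hk : k₁ < k₂) (hk₂ : k₂ ≤ d)
    (q₁ q₂ r₁ r₂ : Polynomial ℝ)
    (hq : CanonShape d k₁ k₂ q₁ q₂) (hr : CanonShape d k₁ k₂ r₁ r₂)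
    (hspan : Submodule.span ℝ ({q₁, q₂} : Set (Polynomial ℝ))
           = Submodule.span ℝ ({r₁, r₂} : Set (Polynomial ℝ))) :
    q₁ = r₁ ∧ q₂ = r₂ := by
  obtain ⟨hq1d, hq1l, hq1pos, hq1z, hq2d, hq2l, hq2pos, hq2z⟩ := hq
  obtain ⟨hr1d, hr1l, hr1pos, hr1z, hr2d, hr2l, hr2pos, hr2z⟩ := hr
  have hmem1 : r₁ ∈ Submodule.span ℝ ({q₁, q₂} : Set (Polynomial ℝ)) := by
    rw [hspan]; exact Submodule.subset_span (by simp)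
  have hmem2 : r₂ ∈ Submodule.span ℝ ({q₁, q₂} : Set (Polynomial ℝ)) := by
    rw [hspan]; exact Submodule.subset_span (by simp)
  rw [Submodule.mem_span_pair] at hmem1 hmem2
  obtain ⟨a, b, hab⟩ := hmem1
  obtain ⟨c, e, hce⟩ := hmem2
  have hq1dz : q₁.coeff d = 0 := coeff_eq_zero_of_natDegree_lt (by omega)
  have hr1dz : r₁.coeff d = 0 := coeff_eq_zero_of_natDegree_lt (by omega)
  -- q₁.coeff k₁ > 0
  have hq1k : 0 < q₁.coeff k₁ := by
    rcases eq_or_lt_of_le (show k₁ + 1 ≤ d by omega) with h | h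
    · have : k₁ = d - 1 := by omega
      rw [this, hq1l]; norm_num
    · exact hq1pos k₁ le_rfl (by omega)
  have hb : b = 0 := by
    have h := congrArg (fun p => Polynomial.coeff p d) hab
    simp [hq1dz, hq2l, hr1dz] at h
    linarith
  have ha : a = 1 := by
    have h := congrArg (fun p => Polynomial.coeff p (d - 1)) hab
    simp [hb, hq1l, hr1l] at h
    linarith
  have hq1r1 : q₁ = r₁ := by
    rw [← hab, ha, hb]; simp
  have he : e = 1 := by
    have h := congrArg (fun p => Polynomial.coeff p d) hce
    simp [hq1dz, hq2l, hr2l] at h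
    linarith
  have hc : c = 0 := by
    have h := congrArg (fun p => Polynomial.coeff p k₁) hce
    simp [hq2z k₁ hk, hr2z k₁ hk] at h
    rcases h with h' | h'
    · exact h'
    · exact absurd h' (ne_of_gt hq1k)
  have hq2r2 : q₂ = r₂ := by
    rw [← hce, hc, he]; simp
  exact ⟨hq1r1, hq2r2⟩
end
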